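/- arXiv:1411.4987 — 2 statements merged into one kernel-verified Lean document; each statement's English description precedes it below -/
import Mathlib

section
/- Let X, Y, Z be compact Hausdorff spaces and let A, B, D be MV-subalgebras of C(X), C(Y), C(Z) respectively. Then (A ⊗ B) ⊗ D equals the MV-subalgebra of C((X×Y)×Z) generated by {((x,y),z) ↦ a(x)·b(y)·d(z) : a ∈ A, b ∈ B, d ∈ D}, and A ⊗ (B ⊗ D) equals the MV-subalgebra of C(X×(Y×Z)) generated by {(x,(y,z)) ↦ a(x)·b(y)·d(z) : a ∈ A, b ∈ B, d ∈ D}. -/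
open Set

/-- `A` is an MV-subalgebra of `C(X, ℝ)`: a set of continuous `[0,1]`-valued functions
containing `0` and closed under `f ⊕ g = (f + g) ⊓ 1` and `f* = 1 - f`. -/
def IsMVSub {X : Type*} [TopologicalSpace X] (A : Set C(X, ℝ)) : Prop :=
  (∀ f ∈ A, ∀ x, f x ∈ Icc (0:ℝ) 1) ∧
  (0 : C(X, ℝ)) ∈ A ∧
  (∀ f ∈ A, ∀ g ∈ A, (f + g) ⊓ 1 ∈ A) ∧
  (∀ f ∈ A, 1 - f ∈ A)

/-- The smallest MV-subalgebra of `C(X, ℝ)` containing `S`. -/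
def mvGen {X : Type*} [TopologicalSpace X] (S : Set C(X, ℝ)) : Set C(X, ℝ) :=
  ⋂₀ {A | IsMVSub A ∧ S ⊆ A}

/-- The semisimple tensor product of MV-subalgebras `A ⊆ C(X, ℝ)` and `B ⊆ C(Y, ℝ)`:
the MV-subalgebra of `C(X × Y, ℝ)` generated by the pointwise products `(x,y) ↦ a x * b y`. -/
def mvTens {X Y : Type*} [TopologicalSpace X] [TopologicalSpace Y]
    (A : Set C(X, ℝ)) (B : Set C(Y, ℝ)) : Set C(X × Y, ℝ) :=
  mvGen {h | ∃ a ∈ A, ∃ b ∈ B, ∀ p : X × Y, h p = a p.1 * b p.2}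

section Aux

variable {X Y : Type*} [TopologicalSpace X] [TopologicalSpace Y]

/-- The product map `(x,y) ↦ f x * g y` as a continuous map. -/
noncomputable def mulF (f : C(X,ℝ)) (g : C(Y,ℝ)) : C(X × Y, ℝ) :=
  f.comp ⟨Prod.fst, continuous_fst⟩ * g.comp ⟨Prod.snd, continuous_snd⟩

@[simp] lemma mulF_apply (f : C(X,ℝ)) (g : C(Y,ℝ)) (p : X × Y) :
    mulF f g p = f p.1 * g p.2 := rfl

lemma isMVSub_unit : IsMVSub {f : C(X,ℝ) | ∀ x, f x ∈ Icc (0:ℝ) 1} := by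
  refine ⟨fun f hf => hf, by simp [mem_Icc], ?_, ?_⟩
  · intro f hf g hg x
    have h1 := hf x; have h2 := hg x
    simp only [mem_Icc, ContinuousMap.inf_apply, ContinuousMap.add_apply,
      ContinuousMap.one_apply] at *
    constructor
    · exact le_min (by linarith [h1.1, h2.1]) one_pos.le
    · exact min_le_right _ _
  · intro f hf x
    have h1 := hf x
    simp only [mem_Icc, ContinuousMap.sub_apply, ContinuousMap.one_apply] at *
    constructor <;> linarith [h1.1, h1.2]

lemma subset_mvGen {S : Set C(X,ℝ)} : S ⊆ mvGen S :=
  fun f hf A hA => hA.2 hf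

lemma mvGen_subset {S A : Set C(X,ℝ)} (h1 : IsMVSub A) (h2 : S ⊆ A) : mvGen S ⊆ A :=
  fun f hf => hf A ⟨h1, h2⟩

lemma mvGen_mono {S T : Set C(X,ℝ)} (h : S ⊆ T) : mvGen S ⊆ mvGen T :=
  fun f hf A hA => hf A ⟨hA.1, h.trans hA.2⟩

lemma isMVSub_mvGen {S : Set C(X,ℝ)} (hS : ∀ f ∈ S, ∀ x, f x ∈ Icc (0:ℝ) 1) :
    IsMVSub (mvGen S) := by
  refine ⟨fun f hf => (mvGen_subset isMVSub_unit hS) hf, ?_, ?_, ?_⟩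
  · intro A hA; exact hA.1.2.1
  · intro f hf g hg A hA; exact hA.1.2.2.1 f (hf A hA) g (hg A hA)
  · intro f hf A hA; exact hA.1.2.2.2 f (hf A hA)

lemma one_mem {A : Set C(X,ℝ)} (hA : IsMVSub A) : (1 : C(X,ℝ)) ∈ A := by
  have := hA.2.2.2 0 hA.2.1
  simpa using this

lemma inf_mem {G : Set C(X,ℝ)} (hG : IsMVSub G) {u v : C(X,ℝ)} (hu : u ∈ G) (hv : v ∈ G) :
    u ⊓ v ∈ G := by
  have hw : ((1 - u) + v) ⊓ 1 ∈ G := hG.2.2.1 _ (hG.2.2.2 u hu) v hv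
  have ht : ((1 - u) + (1 - (((1 - u) + v) ⊓ 1))) ⊓ 1 ∈ G :=
    hG.2.2.1 _ (hG.2.2.2 u hu) _ (hG.2.2.2 _ hw)
  have hres : 1 - (((1 - u) + (1 - (((1 - u) + v) ⊓ 1))) ⊓ 1) ∈ G := hG.2.2.2 _ ht
  have : u ⊓ v = 1 - (((1 - u) + (1 - (((1 - u) + v) ⊓ 1))) ⊓ 1) := by
    ext x
    have hux := hG.1 u hu x; have hvx := hG.1 v hv x
    simp only [mem_Icc] at hux hvx
    simp only [ContinuousMap.inf_apply, ContinuousMap.sub_apply, ContinuousMap.add_apply,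
      ContinuousMap.one_apply]
    rw [min_def, min_def, min_def]; split_ifs <;> linarith [hux.1, hux.2, hvx.1, hvx.2]
  rw [this]; exact hres

end Aux

section Key

variable {X Y : Type*} [TopologicalSpace X] [TopologicalSpace Y]

/-- Key lemma (left version): tensoring with a generated algebra on the left. -/
lemma key_left (S : Set C(X,ℝ)) (D : Set C(Y,ℝ))
    (hS : ∀ f ∈ S, ∀ x, f x ∈ Icc (0:ℝ) 1) (hD : IsMVSub D)
    (hone : (1 : C(X,ℝ)) ∈ S) :
    mvTens (mvGen S) D =
      mvGen {h : C(X × Y,ℝ) | ∃ s ∈ S, ∃ d ∈ D, ∀ p : X × Y, h p = s p.1 * d p.2} := by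
  set T : Set C(X × Y,ℝ) := {h | ∃ s ∈ S, ∃ d ∈ D, ∀ p : X × Y, h p = s p.1 * d p.2} with hT
  have hTv : ∀ h ∈ T, ∀ p, h p ∈ Icc (0:ℝ) 1 := by
    rintro h ⟨s, hs, d, hd, hh⟩ p
    have h1 := hS s hs p.1; have h2 := hD.1 d hd p.2
    simp only [mem_Icc] at *
    rw [hh p]
    exact ⟨mul_nonneg h1.1 h2.1, mul_le_one₀ h1.2 h2.1 h2.2⟩
  have hGT : IsMVSub (mvGen T) := isMVSub_mvGen hTv
  have hSv : ∀ f ∈ mvGen S, ∀ x, f x ∈ Icc (0:ℝ) 1 :=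
    fun f hf => (mvGen_subset isMVSub_unit hS) hf
  apply le_antisymm
  · -- mvTens (mvGen S) D ⊆ mvGen T
    apply mvGen_subset hGT
    rintro h ⟨f, hf, d, hd, hh⟩
    have hhe : h = mulF f d := ContinuousMap.ext hh
    subst hhe
    -- the "slice" algebra
    set P : Set C(X,ℝ) := {f | (∀ x, f x ∈ Icc (0:ℝ) 1) ∧ mulF f d ∈ mvGen T} with hP
    have hdv := hD.1 d hd
    have hδ : mulF 1 d ∈ mvGen T := by
      apply subset_mvGen
      exact ⟨1, hone, d, hd, fun p => rfl⟩
    have hPsub : IsMVSub P := by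
      refine ⟨fun f hf => hf.1, ?_, ?_, ?_⟩
      · refine ⟨by simp [mem_Icc], ?_⟩
        have : mulF (0 : C(X,ℝ)) d = 0 := by ext p; simp
        rw [this]; exact hGT.2.1
      · rintro f ⟨hfv, hfm⟩ g ⟨hgv, hgm⟩
        refine ⟨?_, ?_⟩
        · intro x
          have h1 := hfv x; have h2 := hgv x
          simp only [mem_Icc] at *
          simp only [ContinuousMap.inf_apply, ContinuousMap.add_apply,
            ContinuousMap.one_apply]
          exact ⟨le_min (by linarith [h1.1, h2.1]) one_pos.le, min_le_right _ _⟩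
        · have heq : mulF ((f + g) ⊓ 1) d = ((mulF f d + mulF g d) ⊓ 1) ⊓ mulF 1 d := by
            ext p
            have h1 := hfv p.1; have h2 := hgv p.1; have h3 := hD.1 d hd p.2
            simp only [mem_Icc] at h1 h2 h3
            simp only [mulF_apply, ContinuousMap.inf_apply, ContinuousMap.add_apply,
              ContinuousMap.one_apply, mulF_apply]
            rw [min_def, min_def, min_def]
            split_ifs <;> nlinarith [h1.1, h2.1, h3.1, h3.2]
          rw [heq]
          exact inf_mem hGT (hGT.2.2.1 _ hfm _ hgm) hδ
      · rintro f ⟨hfv, hfm⟩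
        refine ⟨?_, ?_⟩
        · intro x
          have h1 := hfv x
          simp only [mem_Icc] at *
          simp only [ContinuousMap.sub_apply, ContinuousMap.one_apply]
          exact ⟨by linarith [h1.2], by linarith [h1.1]⟩
        · have heq : mulF (1 - f) d = 1 - (((1 - mulF 1 d) + mulF f d) ⊓ 1) := by
            ext p
            have h1 := hfv p.1; have h3 := hD.1 d hd p.2
            simp only [mem_Icc] at h1 h3
            simp only [mulF_apply, ContinuousMap.sub_apply, ContinuousMap.add_apply,
              ContinuousMap.inf_apply, ContinuousMap.one_apply, mulF_apply]
            rw [min_def]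
            split_ifs <;> nlinarith [h1.1, h1.2, h3.1, h3.2]
          rw [heq]
          exact hGT.2.2.2 _ (hGT.2.2.1 _ (hGT.2.2.2 _ hδ) _ hfm)
    have hSP : S ⊆ P := by
      intro s hs
      exact ⟨hS s hs, subset_mvGen ⟨s, hs, d, hd, fun p => rfl⟩⟩
    exact (mvGen_subset hPsub hSP hf).2
  · -- mvGen T ⊆ mvTens (mvGen S) D
    apply mvGen_mono
    rintro h ⟨s, hs, d, hd, hh⟩
    exact ⟨s, subset_mvGen hs, d, hd, hh⟩

/-- Key lemma (right version): tensoring with a generated algebra on the right. -/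
lemma key_right (A : Set C(X,ℝ)) (S : Set C(Y,ℝ))
    (hA : IsMVSub A) (hS : ∀ f ∈ S, ∀ x, f x ∈ Icc (0:ℝ) 1)
    (hone : (1 : C(Y,ℝ)) ∈ S) :
    mvTens A (mvGen S) =
      mvGen {h : C(X × Y,ℝ) | ∃ a ∈ A, ∃ s ∈ S, ∀ p : X × Y, h p = a p.1 * s p.2} := by
  set T : Set C(X × Y,ℝ) := {h | ∃ a ∈ A, ∃ s ∈ S, ∀ p : X × Y, h p = a p.1 * s p.2} with hT
  have hTv : ∀ h ∈ T, ∀ p, h p ∈ Icc (0:ℝ) 1 := by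
    rintro h ⟨a, ha, s, hs, hh⟩ p
    have h1 := hA.1 a ha p.1; have h2 := hS s hs p.2
    simp only [mem_Icc] at *
    rw [hh p]
    exact ⟨mul_nonneg h1.1 h2.1, mul_le_one₀ h1.2 h2.1 h2.2⟩
  have hGT : IsMVSub (mvGen T) := isMVSub_mvGen hTv
  apply le_antisymm
  · apply mvGen_subset hGT
    rintro h ⟨a, ha, f, hf, hh⟩
    have hhe : h = mulF a f := ContinuousMap.ext hh
    subst hhe
    set P : Set C(Y,ℝ) := {f | (∀ x, f x ∈ Icc (0:ℝ) 1) ∧ mulF a f ∈ mvGen T} with hP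
    have hav := hA.1 a ha
    have hδ : mulF a 1 ∈ mvGen T := by
      apply subset_mvGen
      exact ⟨a, ha, 1, hone, fun p => rfl⟩
    have hPsub : IsMVSub P := by
      refine ⟨fun f hf => hf.1, ?_, ?_, ?_⟩
      · refine ⟨by simp [mem_Icc], ?_⟩
        have : mulF a (0 : C(Y,ℝ)) = 0 := by ext p; simp
        rw [this]; exact hGT.2.1
      · rintro f ⟨hfv, hfm⟩ g ⟨hgv, hgm⟩
        refine ⟨?_, ?_⟩
        · intro x
          have h1 := hfv x; have h2 := hgv x
          simp only [mem_Icc] at *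
          simp only [ContinuousMap.inf_apply, ContinuousMap.add_apply,
            ContinuousMap.one_apply]
          exact ⟨le_min (by linarith [h1.1, h2.1]) one_pos.le, min_le_right _ _⟩
        · have heq : mulF a ((f + g) ⊓ 1) = ((mulF a f + mulF a g) ⊓ 1) ⊓ mulF a 1 := by
            ext p
            have h1 := hfv p.2; have h2 := hgv p.2; have h3 := hA.1 a ha p.1
            simp only [mem_Icc] at h1 h2 h3
            simp only [mulF_apply, ContinuousMap.inf_apply, ContinuousMap.add_apply,
              ContinuousMap.one_apply, mulF_apply]
            rw [min_def, min_def, min_def]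
            split_ifs <;> nlinarith [h1.1, h2.1, h3.1, h3.2]
          rw [heq]
          exact inf_mem hGT (hGT.2.2.1 _ hfm _ hgm) hδ
      · rintro f ⟨hfv, hfm⟩
        refine ⟨?_, ?_⟩
        · intro x
          have h1 := hfv x
          simp only [mem_Icc] at *
          simp only [ContinuousMap.sub_apply, ContinuousMap.one_apply]
          exact ⟨by linarith [h1.2], by linarith [h1.1]⟩
        · have heq : mulF a (1 - f) = 1 - (((1 - mulF a 1) + mulF a f) ⊓ 1) := by
            ext p
            have h1 := hfv p.2; have h3 := hA.1 a ha p.1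
            simp only [mem_Icc] at h1 h3
            simp only [mulF_apply, ContinuousMap.sub_apply, ContinuousMap.add_apply,
              ContinuousMap.inf_apply, ContinuousMap.one_apply, mulF_apply]
            rw [min_def]
            split_ifs <;> nlinarith [h1.1, h1.2, h3.1, h3.2]
          rw [heq]
          exact hGT.2.2.2 _ (hGT.2.2.1 _ (hGT.2.2.2 _ hδ) _ hfm)
    have hSP : S ⊆ P := by
      intro s hs
      exact ⟨hS s hs, subset_mvGen ⟨a, ha, s, hs, fun p => rfl⟩⟩
    exact (mvGen_subset hPsub hSP hf).2
  · apply mvGen_mono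
    rintro h ⟨a, ha, s, hs, hh⟩
    exact ⟨a, ha, s, subset_mvGen hs, hh⟩

end Key

/-- `(A ⊗ B) ⊗ D` is the MV-subalgebra of `C((X × Y) × Z, ℝ)` generated by the
triple products, and `A ⊗ (B ⊗ D)` is the MV-subalgebra of `C(X × (Y × Z), ℝ)` generated by
the triple products. -/
theorem stmt2 {X Y Z : Type*}
    [TopologicalSpace X] [CompactSpace X] [T2Space X]
    [TopologicalSpace Y] [CompactSpace Y] [T2Space Y]
    [TopologicalSpace Z] [CompactSpace Z] [T2Space Z]
    (A : Set C(X, ℝ)) (B : Set C(Y, ℝ)) (D : Set C(Z, ℝ))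
    (hA : IsMVSub A) (hB : IsMVSub B) (hD : IsMVSub D) :
    mvTens (mvTens A B) D = mvGen {h : C((X × Y) × Z, ℝ) |
      ∃ a ∈ A, ∃ b ∈ B, ∃ e ∈ D, ∀ p : (X × Y) × Z, h p = a p.1.1 * b p.1.2 * e p.2} ∧
    mvTens A (mvTens B D) = mvGen {h : C(X × (Y × Z), ℝ) |
      ∃ a ∈ A, ∃ b ∈ B, ∃ e ∈ D, ∀ p : X × (Y × Z), h p = a p.1 * b p.2.1 * e p.2.2} := by
  constructor
  · -- left associated
    set S₀ : Set C(X × Y, ℝ) := {h | ∃ a ∈ A, ∃ b ∈ B, ∀ p : X × Y, h p = a p.1 * b p.2}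
      with hS₀
    have hS₀v : ∀ f ∈ S₀, ∀ x, f x ∈ Icc (0:ℝ) 1 := by
      rintro f ⟨a, ha, b, hb, hf⟩ p
      have h1 := hA.1 a ha p.1; have h2 := hB.1 b hb p.2
      simp only [mem_Icc] at *
      rw [hf p]
      exact ⟨mul_nonneg h1.1 h2.1, mul_le_one₀ h1.2 h2.1 h2.2⟩
    have hone : (1 : C(X × Y, ℝ)) ∈ S₀ :=
      ⟨1, one_mem hA, 1, one_mem hB, fun p => by simp⟩
    have hkey := key_left S₀ D hS₀v hD hone
    have : mvTens (mvTens A B) D = mvTens (mvGen S₀) D := rfl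
    rw [this, hkey]
    have hsets : {h : C((X × Y) × Z, ℝ) | ∃ s ∈ S₀, ∃ d ∈ D, ∀ p : (X × Y) × Z,
        h p = s p.1 * d p.2} = {h : C((X × Y) × Z, ℝ) |
        ∃ a ∈ A, ∃ b ∈ B, ∃ e ∈ D, ∀ p : (X × Y) × Z, h p = a p.1.1 * b p.1.2 * e p.2} := by
      ext h
      constructor
      · rintro ⟨s, ⟨a, ha, b, hb, hs⟩, d, hd, hh⟩
        exact ⟨a, ha, b, hb, d, hd, fun p => by rw [hh p, hs p.1]⟩
      · rintro ⟨a, ha, b, hb, d, hd, hh⟩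
        exact ⟨mulF a b, ⟨a, ha, b, hb, fun q => rfl⟩, d, hd, fun p => by rw [hh p]; rfl⟩
    rw [hsets]
  · -- right associated
    set S₁ : Set C(Y × Z, ℝ) := {h | ∃ b ∈ B, ∃ d ∈ D, ∀ p : Y × Z, h p = b p.1 * d p.2}
      with hS₁
    have hS₁v : ∀ f ∈ S₁, ∀ x, f x ∈ Icc (0:ℝ) 1 := by
      rintro f ⟨b, hb, d, hd, hf⟩ p
      have h1 := hB.1 b hb p.1; have h2 := hD.1 d hd p.2
      simp only [mem_Icc] at *
      rw [hf p]
      exact ⟨mul_nonneg h1.1 h2.1, mul_le_one₀ h1.2 h2.1 h2.2⟩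
    have hone : (1 : C(Y × Z, ℝ)) ∈ S₁ :=
      ⟨1, one_mem hB, 1, one_mem hD, fun p => by simp⟩
    have hkey := key_right A S₁ hA hS₁v hone
    have : mvTens A (mvTens B D) = mvTens A (mvGen S₁) := rfl
    rw [this, hkey]
    have hsets : {h : C(X × (Y × Z), ℝ) | ∃ a ∈ A, ∃ s ∈ S₁, ∀ p : X × (Y × Z),
        h p = a p.1 * s p.2} = {h : C(X × (Y × Z), ℝ) |
        ∃ a ∈ A, ∃ b ∈ B, ∃ e ∈ D, ∀ p : X × (Y × Z), h p = a p.1 * b p.2.1 * e p.2.2} := by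
      ext h
      constructor
      · rintro ⟨a, ha, s, ⟨b, hb, d, hd, hs⟩, hh⟩
        exact ⟨a, ha, b, hb, d, hd, fun p => by rw [hh p, hs p.2]; ring⟩
      · rintro ⟨a, ha, b, hb, d, hd, hh⟩
        refine ⟨a, ha, mulF b d, ⟨b, hb, d, hd, fun q => rfl⟩,
          fun p => by rw [hh p]; simp [mul_assoc]⟩
    rw [hsets]
end

section
/- For every semisimple MV-algebra A there exist a unital commutative semisimple fMV-algebra F and an MV-algebra homomorphism ι : A → F such that for every unital commutative semisimple fMV-algebra D and every MV-algebra homomorphism f : A → D there is a unique fMV-algebra homomorphism g : F → D with g ∘ ι = f (the semisimple tensor fMV-algebra of A). -/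
universe u v w

/-- An MV-algebra structure on the type `A`. -/
structure MVAlg (A : Type u) where
  oplus : A → A → A
  star : A → A
  zero : A
  oplus_comm : ∀ x y, oplus x y = oplus y x
  oplus_assoc : ∀ x y z, oplus (oplus x y) z = oplus x (oplus y z)
  oplus_zero : ∀ x, oplus x zero = x
  star_star : ∀ x, star (star x) = x
  oplus_one : ∀ x, oplus x (star zero) = star zero
  luk : ∀ x y, oplus (star (oplus (star x) y)) y = oplus (star (oplus (star y) x)) x

namespace MVAlg

variable {A : Type u}

/-- The top element `1 := 0*`. -/
def one (M : MVAlg A) : A := M.star M.zero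

/-- The underlying order: `x ≤ y` iff `x* ⊕ y = 1`. -/
def le (M : MVAlg A) (x y : A) : Prop := M.oplus (M.star x) y = M.one

/-- An ideal: contains `0`, closed under `⊕` and downward closed. -/
def IsIdeal (M : MVAlg A) (I : Set A) : Prop :=
  M.zero ∈ I ∧ (∀ x ∈ I, ∀ y ∈ I, M.oplus x y ∈ I) ∧ (∀ x y, M.le x y → y ∈ I → x ∈ I)

/-- A maximal proper ideal. -/
def IsMaximalIdeal (M : MVAlg A) (I : Set A) : Prop :=
  M.IsIdeal I ∧ I ≠ Set.univ ∧ ∀ J, M.IsIdeal J → J ≠ Set.univ → I ⊆ J → J = I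

/-- Semisimplicity: the intersection of all maximal proper ideals is `{0}`. -/
def Semisimple (M : MVAlg A) : Prop :=
  {x | ∀ I, M.IsMaximalIdeal I → x ∈ I} = {M.zero}

end MVAlg

/-- Homomorphisms of MV-algebras preserve `⊕`, `*` and `0`. -/
def MVHom {A : Type u} {B : Type v} (M : MVAlg A) (N : MVAlg B) (f : A → B) : Prop :=
  (∀ x y, f (M.oplus x y) = N.oplus (f x) (f y)) ∧
  (∀ x, f (M.star x) = N.star (f x)) ∧ f M.zero = N.zero

/-- A unital commutative PMV-algebra. -/
structure PMVAlg (A : Type u) extends MVAlg A where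
  mul : A → A → A
  mul_assoc : ∀ x y z, mul (mul x y) z = mul x (mul y z)
  mul_comm : ∀ x y, mul x y = mul y x
  mul_one : ∀ x, mul x toMVAlg.one = x
  mul_linear_right : ∀ x y z, toMVAlg.le y (toMVAlg.star z) →
    mul x (toMVAlg.oplus y z) = toMVAlg.oplus (mul x y) (mul x z)
  mul_linear_left : ∀ x y z, toMVAlg.le x (toMVAlg.star y) →
    mul (toMVAlg.oplus x y) z = toMVAlg.oplus (mul x z) (mul y z)

/-- Semisimplicity of a PMV-algebra is semisimplicity of its MV-reduct. -/
def PMVAlg.Semisimple {A : Type u} (P : PMVAlg A) : Prop := P.toMVAlg.Semisimple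

/-- Homomorphisms of PMV-algebras. -/
def PMVHom {A : Type u} {B : Type v} (P : PMVAlg A) (Q : PMVAlg B) (f : A → B) : Prop :=
  MVHom P.toMVAlg Q.toMVAlg f ∧ ∀ x y, f (P.mul x y) = Q.mul (f x) (f y)

/-- A Riesz MV-algebra: an MV-algebra with a scalar multiplication by elements of `[0,1]`. -/
structure RieszMVAlg (A : Type u) extends MVAlg A where
  smul : ℝ → A → A
  smul_oplus : ∀ α : ℝ, α ∈ Set.Icc (0:ℝ) 1 → ∀ x y, toMVAlg.le x (toMVAlg.star y) →
    smul α (toMVAlg.oplus x y) = toMVAlg.oplus (smul α x) (smul α y)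
  add_smul : ∀ α β : ℝ, α ∈ Set.Icc (0:ℝ) 1 → β ∈ Set.Icc (0:ℝ) 1 → α + β ≤ 1 → ∀ x,
    smul (α + β) x = toMVAlg.oplus (smul α x) (smul β x) ∧
    toMVAlg.le (smul α x) (toMVAlg.star (smul β x))
  mul_smul : ∀ α β : ℝ, α ∈ Set.Icc (0:ℝ) 1 → β ∈ Set.Icc (0:ℝ) 1 → ∀ x,
    smul (α * β) x = smul α (smul β x)
  one_smul : ∀ x, smul 1 x = x

/-- Semisimplicity of a Riesz MV-algebra. -/
def RieszMVAlg.Semisimple {A : Type u} (R : RieszMVAlg A) : Prop := R.toMVAlg.Semisimple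

/-- Homomorphisms of Riesz MV-algebras. -/
def RieszMVHom {A : Type u} {B : Type v} (R : RieszMVAlg A) (S : RieszMVAlg B) (f : A → B) : Prop :=
  MVHom R.toMVAlg S.toMVAlg f ∧
  ∀ α : ℝ, α ∈ Set.Icc (0:ℝ) 1 → ∀ x, f (R.smul α x) = S.smul α (f x)

/-- A unital commutative fMV-algebra. -/
structure FMVAlg (A : Type u) extends PMVAlg A, RieszMVAlg A where
  smul_mul_left : ∀ α : ℝ, α ∈ Set.Icc (0:ℝ) 1 → ∀ x y,
    smul α (mul x y) = mul (smul α x) y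
  smul_mul_right : ∀ α : ℝ, α ∈ Set.Icc (0:ℝ) 1 → ∀ x y,
    smul α (mul x y) = mul x (smul α y)

/-- Semisimplicity of an fMV-algebra. -/
def FMVAlg.Semisimple {A : Type u} (F : FMVAlg A) : Prop := F.toMVAlg.Semisimple

/-- Homomorphisms of fMV-algebras preserve `⊕`, `*`, `0`, `·` and scalar multiplication. -/
def FMVHom {A : Type u} {B : Type v} (F : FMVAlg A) (G : FMVAlg B) (f : A → B) : Prop :=
  MVHom F.toMVAlg G.toMVAlg f ∧
  (∀ x y, f (F.mul x y) = G.mul (f x) (f y)) ∧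
  (∀ α : ℝ, α ∈ Set.Icc (0:ℝ) 1 → ∀ x, f (F.smul α x) = G.smul α (f x))
namespace MVAlg

variable {A : Type u} {B : Type v}

/-- Truncated subtraction `x ⊖ y = (x* ⊕ y)*`. -/
def sub (M : MVAlg A) (x y : A) : A := M.star (M.oplus (M.star x) y)

/-- Join `x ∨ y`. -/
def join (M : MVAlg A) (x y : A) : A := M.oplus (M.sub x y) y

/-- Meet `x ∧ y = x ⊖ (x ⊖ y)`. -/
def meet (M : MVAlg A) (x y : A) : A := M.sub x (M.sub x y)

/-- `n`-fold sum. -/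
def nfold (M : MVAlg A) : ℕ → A → A
  | 0, _ => M.zero
  | n+1, x => M.oplus x (M.nfold n x)

variable (M : MVAlg A)

lemma zero_oplus (x : A) : M.oplus M.zero x = x := by
  rw [M.oplus_comm]; exact M.oplus_zero x

lemma oplus_one' (x : A) : M.oplus x M.one = M.one := M.oplus_one x

lemma one_oplus (x : A) : M.oplus M.one x = M.one := by
  rw [M.oplus_comm]; exact M.oplus_one' x

lemma star_inj {x y : A} (h : M.star x = M.star y) : x = y := by
  have := congrArg M.star h; rwa [M.star_star, M.star_star] at this

lemma star_one : M.star M.one = M.zero := M.star_star M.zero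

lemma le_refl (x : A) : M.le x x := by
  have h := M.luk x M.one
  rw [M.oplus_one' (M.star x), M.star_one, M.zero_oplus, M.zero_oplus] at h
  exact h.symm

lemma oplus_star_self (x : A) : M.oplus x (M.star x) = M.one := by
  have := M.le_refl (M.star x); unfold le at this; rwa [M.star_star] at this

lemma le_one (x : A) : M.le x M.one := M.oplus_one' _

lemma zero_le (x : A) : M.le M.zero x := by
  show M.oplus (M.star M.zero) x = M.one
  exact M.one_oplus x

lemma le_antisymm {x y : A} (h1 : M.le x y) (h2 : M.le y x) : x = y := by
  have h := M.luk x y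
  unfold le at h1 h2
  rw [h1, h2, M.star_one, M.zero_oplus, M.zero_oplus] at h
  exact h.symm

/-- decomposition: if `x ≤ y` then `y = (y ⊖ x) ⊕ x`. -/
lemma decomp {x y : A} (h : M.le x y) : y = M.oplus (M.sub y x) x := by
  have hl := M.luk x y
  unfold le at h
  rw [h, M.star_one, M.zero_oplus] at hl
  exact hl

lemma le_trans {x y z : A} (h1 : M.le x y) (h2 : M.le y z) : M.le x z := by
  show M.oplus (M.star x) z = M.one
  calc M.oplus (M.star x) z
      = M.oplus (M.star x) (M.oplus (M.sub z y) y) := by rw [← M.decomp h2]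
    _ = M.oplus (M.sub z y) (M.oplus (M.star x) y) := by
        rw [← M.oplus_assoc, M.oplus_comm (M.star x) (M.sub z y), M.oplus_assoc]
    _ = M.oplus (M.sub z y) M.one := by rw [h1]
    _ = M.one := M.oplus_one' _

lemma le_oplus_left (x y : A) : M.le x (M.oplus x y) := by
  show M.oplus (M.star x) (M.oplus x y) = M.one
  rw [← M.oplus_assoc, M.oplus_comm (M.star x) x, M.oplus_star_self, M.one_oplus]

lemma le_oplus_right (x y : A) : M.le x (M.oplus y x) := by
  rw [M.oplus_comm]; exact M.le_oplus_left x y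

lemma oplus_le_oplus_right {x y : A} (h : M.le x y) (z : A) :
    M.le (M.oplus x z) (M.oplus y z) := by
  rw [M.decomp h, M.oplus_assoc]; exact M.le_oplus_right _ _

lemma oplus_le_oplus_left {x y : A} (h : M.le x y) (z : A) :
    M.le (M.oplus z x) (M.oplus z y) := by
  rw [M.oplus_comm z x, M.oplus_comm z y]; exact M.oplus_le_oplus_right h z

lemma star_le_star {x y : A} (h : M.le x y) : M.le (M.star y) (M.star x) := by
  show M.oplus (M.star (M.star y)) (M.star x) = M.one
  rw [M.star_star, M.oplus_comm]; exact h

lemma sub_self (x : A) : M.sub x x = M.zero := by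
  show M.star (M.oplus (M.star x) x) = M.zero
  rw [M.le_refl x, M.star_one]

lemma sub_zero (x : A) : M.sub x M.zero = x := by
  show M.star (M.oplus (M.star x) M.zero) = x
  rw [M.oplus_zero, M.star_star]

lemma zero_sub (x : A) : M.sub M.zero x = M.zero := by
  show M.star (M.oplus M.one x) = M.zero
  rw [M.one_oplus, M.star_one]

lemma sub_eq_zero_of_le {x y : A} (h : M.le x y) : M.sub x y = M.zero := by
  show M.star (M.oplus (M.star x) y) = M.zero
  rw [h, M.star_one]

lemma le_of_sub_eq_zero {x y : A} (h : M.sub x y = M.zero) : M.le x y := by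
  have h' : M.star (M.oplus (M.star x) y) = M.zero := h
  have h2 := congrArg M.star h'
  rw [M.star_star] at h2
  exact h2

lemma sub_le_self (x y : A) : M.le (M.sub x y) x := by
  show M.oplus (M.star (M.sub x y)) x = M.one
  show M.oplus (M.star (M.star (M.oplus (M.star x) y))) x = M.one
  rw [M.star_star, M.oplus_comm (M.star x) y, M.oplus_assoc, M.oplus_comm (M.star x) x,
    M.oplus_star_self, M.oplus_one']

lemma sub_le_sub_right {x y : A} (h : M.le x y) (c : A) :
    M.le (M.sub x c) (M.sub y c) := by
  show M.le (M.star (M.oplus (M.star x) c)) (M.star (M.oplus (M.star y) c))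
  exact M.star_le_star (M.oplus_le_oplus_right (M.star_le_star h) c)

lemma sub_oplus_le (b c : A) : M.le (M.sub (M.oplus b c) c) b := by
  show M.oplus (M.star (M.star (M.oplus (M.star (M.oplus b c)) c))) b = M.one
  rw [M.star_star, M.oplus_assoc, M.oplus_comm c b]
  rw [M.oplus_comm (M.star (M.oplus b c)) (M.oplus b c)]
  exact M.oplus_star_self _

lemma residuation {a b c : A} (h : M.le a (M.oplus b c)) : M.le (M.sub a c) b :=
  M.le_trans (M.sub_le_sub_right h c) (M.sub_oplus_le b c)

lemma join_comm (x y : A) : M.join x y = M.join y x := M.luk x y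

lemma le_join_right (x y : A) : M.le y (M.join x y) := M.le_oplus_right _ _

lemma le_join_left (x y : A) : M.le x (M.join x y) := by
  rw [M.join_comm]; exact M.le_oplus_right _ _

lemma join_of_le {x y : A} (h : M.le x y) : M.join x y = y := by
  show M.oplus (M.sub x y) y = y
  rw [M.sub_eq_zero_of_le h, M.zero_oplus]

lemma le_sub_oplus (x y : A) : M.le x (M.oplus (M.sub x y) y) := M.le_join_left x y

lemma meet_le_left (x y : A) : M.le (M.meet x y) x := M.sub_le_self x _

lemma meet_le_right (x y : A) : M.le (M.meet x y) y := by
  apply M.residuation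
  rw [M.oplus_comm]; exact M.le_sub_oplus x y

lemma sub_meet_le (x y : A) : M.le (M.sub x (M.meet x y)) (M.sub x y) := by
  apply M.residuation
  rw [M.oplus_comm]; exact M.le_sub_oplus x (M.sub x y)

lemma triangle (x y z : A) :
    M.le (M.sub x z) (M.oplus (M.sub x y) (M.sub y z)) := by
  apply M.residuation
  refine M.le_trans (M.le_sub_oplus x y) ?_
  rw [M.oplus_assoc]
  exact M.oplus_le_oplus_left (M.le_sub_oplus y z) _

lemma nfold_add (m n : ℕ) (x : A) :
    M.nfold (m + n) x = M.oplus (M.nfold m x) (M.nfold n x) := by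
  induction m with
  | zero => simp [nfold, M.zero_oplus]
  | succ k ih =>
      rw [Nat.succ_add]
      show M.oplus x (M.nfold (k + n) x) = M.oplus (M.oplus x (M.nfold k x)) (M.nfold n x)
      rw [ih, M.oplus_assoc]

lemma oplus_oplus_oplus (a b c d : A) :
    M.oplus (M.oplus a b) (M.oplus c d) = M.oplus (M.oplus a c) (M.oplus b d) := by
  rw [M.oplus_assoc, M.oplus_assoc]
  congr 1
  rw [← M.oplus_assoc, ← M.oplus_assoc, M.oplus_comm b c]

end MVAlg
namespace MVAlg

variable {A : Type u} {B : Type v} (M : MVAlg A)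

lemma ideal_univ_of_one_mem {J : Set A} (hJ : M.IsIdeal J) (h1 : M.one ∈ J) :
    J = Set.univ := by
  ext x; simp only [Set.mem_univ, iff_true]
  exact hJ.2.2 x M.one (M.le_one x) h1

lemma one_not_mem {J : Set A} (hJ : M.IsIdeal J) (hp : J ≠ Set.univ) : M.one ∉ J :=
  fun h => hp (M.ideal_univ_of_one_mem hJ h)

/-- Congruence modulo an ideal. -/
def Rel (M : MVAlg A) (J : Set A) (x y : A) : Prop := M.sub x y ∈ J ∧ M.sub y x ∈ J

variable {J : Set A}

lemma rel_refl (hJ : M.IsIdeal J) (x : A) : M.Rel J x x := by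
  constructor <;> (rw [M.sub_self]; exact hJ.1)

lemma rel_of_eq (hJ : M.IsIdeal J) {x y : A} (h : x = y) : M.Rel J x y := h ▸ M.rel_refl hJ x

lemma rel_symm {x y : A} (h : M.Rel J x y) : M.Rel J y x := ⟨h.2, h.1⟩

lemma mem_of_le_of_mem (hJ : M.IsIdeal J) {x y : A} (h : M.le x y) (hy : y ∈ J) : x ∈ J := hJ.2.2 x y h hy

lemma rel_trans (hJ : M.IsIdeal J) {x y z : A} (h1 : M.Rel J x y) (h2 : M.Rel J y z) : M.Rel J x z := by
  constructor
  · exact M.mem_of_le_of_mem hJ (M.triangle x y z) (hJ.2.1 _ h1.1 _ h2.1)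
  · exact M.mem_of_le_of_mem hJ (M.triangle z y x) (hJ.2.1 _ h2.2 _ h1.2)

lemma mem_of_rel_of_mem (hJ : M.IsIdeal J) {x y : A} (h : M.Rel J x y) (hx : x ∈ J) : y ∈ J := by
  have hle : M.le y (M.oplus (M.sub y x) x) := M.le_sub_oplus y x
  exact M.mem_of_le_of_mem hJ hle (hJ.2.1 _ h.2 _ hx)

lemma sub_oplus_le_sub (x x' z : A) :
    M.le (M.sub (M.oplus x z) (M.oplus x' z)) (M.sub x x') := by
  apply M.residuation
  have h1 : M.le x (M.oplus (M.sub x x') x') := M.le_sub_oplus x x'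
  have h2 := M.oplus_le_oplus_right h1 z
  rwa [M.oplus_assoc] at h2

lemma rel_oplus_right (hJ : M.IsIdeal J) {x x' : A} (z : A) (h : M.Rel J x x') :
    M.Rel J (M.oplus x z) (M.oplus x' z) :=
  ⟨M.mem_of_le_of_mem hJ (M.sub_oplus_le_sub x x' z) h.1,
   M.mem_of_le_of_mem hJ (M.sub_oplus_le_sub x' x z) h.2⟩

lemma rel_oplus (hJ : M.IsIdeal J) {x x' y y' : A} (hx : M.Rel J x x') (hy : M.Rel J y y') :
    M.Rel J (M.oplus x y) (M.oplus x' y') := by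
  refine M.rel_trans hJ (M.rel_oplus_right hJ y hx) ?_
  rw [M.oplus_comm x' y, M.oplus_comm x' y']
  exact M.rel_oplus_right hJ x' hy

lemma sub_star_star (x y : A) : M.sub (M.star x) (M.star y) = M.sub y x := by
  show M.star (M.oplus (M.star (M.star x)) (M.star y)) = M.star (M.oplus (M.star y) x)
  rw [M.star_star, M.oplus_comm]

lemma rel_star {x y : A} (h : M.Rel J x y) : M.Rel J (M.star x) (M.star y) := by
  constructor
  · rw [M.sub_star_star]; exact h.2
  · rw [M.sub_star_star]; exact h.1

lemma rel_one_iff (hJ : M.IsIdeal J) {x : A} : M.Rel J x M.one ↔ M.star x ∈ J := by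
  constructor
  · intro h
    have h2 := h.2
    have : M.sub M.one x = M.star x := by
      show M.star (M.oplus (M.star M.one) x) = M.star x
      rw [M.star_one, M.zero_oplus]
    rwa [this] at h2
  · intro h
    constructor
    · rw [M.sub_eq_zero_of_le (M.le_one x)]; exact hJ.1
    · have : M.sub M.one x = M.star x := by
        show M.star (M.oplus (M.star M.one) x) = M.star x
        rw [M.star_one, M.zero_oplus]
      rw [this]; exact h

lemma rel_zero_iff (hJ : M.IsIdeal J) {x : A} : M.Rel J x M.zero ↔ x ∈ J := by
  constructor
  · intro h; have := h.1; rwa [M.sub_zero] at this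
  · intro h
    exact ⟨by rw [M.sub_zero]; exact h, by rw [M.zero_sub]; exact hJ.1⟩

/-- truncation: if `x ⊖ c ∈ J` then `x ≈ x ∧ c`. -/
lemma rel_meet (hJ : M.IsIdeal J) {x c : A} (h : M.sub x c ∈ J) : M.Rel J x (M.meet x c) := by
  constructor
  · exact M.mem_of_le_of_mem hJ (M.sub_meet_le x c) h
  · rw [M.sub_eq_zero_of_le (M.meet_le_left x c)]; exact hJ.1

end MVAlg

section Hom

variable {A : Type u} {B : Type v} {M : MVAlg A} {N : MVAlg B} {e : A → B}

lemma MVHom.one (he : MVHom M N e) : e M.one = N.one := by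
  show e (M.star M.zero) = N.star N.zero
  rw [he.2.1, he.2.2]

lemma MVHom.sub (he : MVHom M N e) (x y : A) : e (M.sub x y) = N.sub (e x) (e y) := by
  show e (M.star (M.oplus (M.star x) y)) = N.star (N.oplus (N.star (e x)) (e y))
  rw [he.2.1, he.1, he.2.1]

lemma MVHom.le (he : MVHom M N e) {x y : A} (h : M.le x y) : N.le (e x) (e y) := by
  show N.oplus (N.star (e x)) (e y) = N.one
  rw [← he.2.1, ← he.1, h, he.one]

lemma MVHom.nfold (he : MVHom M N e) (n : ℕ) (x : A) :
    e (M.nfold n x) = N.nfold n (e x) := by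
  induction n with
  | zero => exact he.2.2
  | succ k ih =>
      show e (M.oplus x (M.nfold k x)) = N.oplus (e x) (N.nfold k (e x))
      rw [he.1, ih]

end Hom
namespace PMVAlg

variable {A : Type u} (P : PMVAlg A)

lemma sub_le_star (M : MVAlg A) (v u : A) : M.le (M.sub v u) (M.star u) := by
  show M.oplus (M.star (M.star (M.oplus (M.star v) u))) (M.star u) = M.one
  rw [M.star_star, M.oplus_assoc, M.oplus_star_self, M.oplus_one']

lemma mul_le_left (x y : A) : P.toMVAlg.le (P.mul x y) x := by
  set M := P.toMVAlg
  have hc : M.le y (M.star (M.star y)) := by rw [M.star_star]; exact M.le_refl y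
  have h := P.mul_linear_right x y (M.star y) hc
  rw [show M.oplus y (M.star y) = M.one from M.oplus_star_self y, P.mul_one] at h
  have g := M.le_oplus_left (P.mul x y) (P.mul x (M.star y))
  rw [← h] at g; exact g

lemma mul_mono_left {u v : A} (h : P.toMVAlg.le u v) (y : A) :
    P.toMVAlg.le (P.mul u y) (P.mul v y) := by
  set M := P.toMVAlg
  have hd := M.decomp h
  have hl := P.mul_linear_left (M.sub v u) u y (sub_le_star M v u)
  rw [hd, hl]; exact M.le_oplus_right _ _

lemma mul_sub_le (x x' y : A) :
    P.toMVAlg.le (P.toMVAlg.sub (P.mul x y) (P.mul x' y)) (P.toMVAlg.sub x x') := by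
  set M := P.toMVAlg
  have h1 : M.le (P.mul x y) (M.oplus (P.mul (M.sub x x') y) (P.mul x' y)) := by
    have := P.mul_linear_left (M.sub x x') x' y (sub_le_star M x x')
    rw [← this]
    exact P.mul_mono_left (M.le_sub_oplus x x') y
  exact M.le_trans (M.residuation h1) (P.mul_le_left _ _)

lemma rel_mul {J : Set A} (hJ : P.toMVAlg.IsIdeal J) {x x' y y' : A}
    (hx : P.toMVAlg.Rel J x x') (hy : P.toMVAlg.Rel J y y') :
    P.toMVAlg.Rel J (P.mul x y) (P.mul x' y') := by
  set M := P.toMVAlg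
  have step : ∀ a a' b : A, M.Rel J a a' → M.Rel J (P.mul a b) (P.mul a' b) := by
    intro a a' b h
    exact ⟨M.mem_of_le_of_mem hJ (P.mul_sub_le a a' b) h.1,
      M.mem_of_le_of_mem hJ (P.mul_sub_le a' a b) h.2⟩
  refine M.rel_trans hJ (step x x' y hx) ?_
  rw [P.mul_comm x' y, P.mul_comm x' y']
  exact step y y' x' hy

end PMVAlg

namespace RieszMVAlg

variable {A : Type u} (R : RieszMVAlg A)

lemma smul_le_self {α : ℝ} (hα : α ∈ Set.Icc (0:ℝ) 1) (x : A) :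
    R.toMVAlg.le (R.smul α x) x := by
  set M := R.toMVAlg
  have h1 : (1 - α) ∈ Set.Icc (0:ℝ) 1 := ⟨by linarith [hα.2], by linarith [hα.1]⟩
  have h := (R.add_smul α (1-α) hα h1 (by linarith) x).1
  rw [show α + (1 - α) = 1 by ring, R.one_smul] at h
  have g := M.le_oplus_left (R.smul α x) (R.smul (1-α) x)
  rw [← h] at g; exact g

lemma smul_mono {α : ℝ} (hα : α ∈ Set.Icc (0:ℝ) 1) {u v : A} (h : R.toMVAlg.le u v) :
    R.toMVAlg.le (R.smul α u) (R.smul α v) := by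
  set M := R.toMVAlg
  have hd := M.decomp h
  have hl := R.smul_oplus α hα (M.sub v u) u (PMVAlg.sub_le_star M v u)
  rw [hd, hl]; exact M.le_oplus_right _ _

lemma smul_sub_le {α : ℝ} (hα : α ∈ Set.Icc (0:ℝ) 1) (x x' : A) :
    R.toMVAlg.le (R.toMVAlg.sub (R.smul α x) (R.smul α x')) (R.toMVAlg.sub x x') := by
  set M := R.toMVAlg
  have h1 : M.le (R.smul α x) (M.oplus (R.smul α (M.sub x x')) (R.smul α x')) := by
    rw [← R.smul_oplus α hα (M.sub x x') x' (PMVAlg.sub_le_star M x x')]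
    exact R.smul_mono hα (M.le_sub_oplus x x')
  exact M.le_trans (M.residuation h1) (R.smul_le_self hα _)

lemma rel_smul {J : Set A} (hJ : R.toMVAlg.IsIdeal J) {α : ℝ} (hα : α ∈ Set.Icc (0:ℝ) 1)
    {x x' : A} (h : R.toMVAlg.Rel J x x') :
    R.toMVAlg.Rel J (R.smul α x) (R.smul α x') :=
  ⟨R.toMVAlg.mem_of_le_of_mem hJ (R.smul_sub_le hα x x') h.1,
   R.toMVAlg.mem_of_le_of_mem hJ (R.smul_sub_le hα x' x) h.2⟩

end RieszMVAlg

namespace MVAlg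

variable {A : Type u} {B : Type v} (M : MVAlg A)

lemma nfold_mem {K : Set A} (hK : M.IsIdeal K) {x : A} (hx : x ∈ K) (n : ℕ) :
    M.nfold n x ∈ K := by
  induction n with
  | zero => exact hK.1
  | succ k ih => exact hK.2.1 x hx (M.nfold k x) ih

lemma exists_one_le_of_maximal {J : Set A} (hJ : M.IsMaximalIdeal J) {d : A}
    (hd : d ∉ J) : ∃ j ∈ J, ∃ n : ℕ, M.le M.one (M.oplus j (M.nfold n d)) := by
  classical
  set I : Set A := {z | ∃ j ∈ J, ∃ n : ℕ, M.le z (M.oplus j (M.nfold n d))} with hI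
  have hIdeal : M.IsIdeal I := by
    refine ⟨⟨M.zero, hJ.1.1, 0, M.zero_le _⟩, ?_, ?_⟩
    · rintro z1 ⟨j1, hj1, n1, h1⟩ z2 ⟨j2, hj2, n2, h2⟩
      refine ⟨M.oplus j1 j2, hJ.1.2.1 _ hj1 _ hj2, n1 + n2, ?_⟩
      rw [M.nfold_add, M.oplus_oplus_oplus]
      exact M.le_trans (M.oplus_le_oplus_right h1 z2)
        (M.oplus_le_oplus_left h2 _)
    · rintro x y hxy ⟨j, hj, n, h⟩
      exact ⟨j, hj, n, M.le_trans hxy h⟩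
  have hJI : J ⊆ I := by
    intro z hz
    exact ⟨z, hz, 0, by show M.le z (M.oplus z (M.nfold 0 d)); rw [show M.nfold 0 d = M.zero from rfl, M.oplus_zero]; exact M.le_refl z⟩
  have hdI : d ∈ I := by
    refine ⟨M.zero, hJ.1.1, 1, ?_⟩
    show M.le d (M.oplus M.zero (M.nfold 1 d))
    rw [M.zero_oplus]
    show M.le d (M.oplus d (M.nfold 0 d))
    rw [show M.nfold 0 d = M.zero from rfl, M.oplus_zero]
    exact M.le_refl d
  by_cases hu : I = Set.univ
  · have h1 : M.one ∈ I := hu ▸ Set.mem_univ _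
    exact h1
  · have := hJ.2.2 I hIdeal hu hJI
    exact absurd (this ▸ hdI) hd

lemma ideal_preimage {N : MVAlg B} {e : A → B} (he : MVHom M N e) {J : Set B}
    (hJ : N.IsIdeal J) : M.IsIdeal (e ⁻¹' J) := by
  refine ⟨?_, ?_, ?_⟩
  · show e M.zero ∈ J; rw [he.2.2]; exact hJ.1
  · intro x hx y hy; show e (M.oplus x y) ∈ J; rw [he.1]; exact hJ.2.1 _ hx _ hy
  · intro x y hxy hy; exact hJ.2.2 (e x) (e y) (he.le hxy) hy

/-- Pullback of a maximal ideal along an MV-homomorphism is maximal. -/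
lemma maximal_preimage {N : MVAlg B} {e : A → B} (he : MVHom M N e) {J : Set B}
    (hJ : N.IsMaximalIdeal J) : M.IsMaximalIdeal (e ⁻¹' J) := by
  refine ⟨M.ideal_preimage he hJ.1, ?_, ?_⟩
  · intro h
    have h1 : M.one ∈ e ⁻¹' J := h ▸ Set.mem_univ _
    have : N.one ∈ J := by rw [← he.one]; exact h1
    exact N.one_not_mem hJ.1 hJ.2.1 this
  · intro K hK hKp hsub
    by_contra hne
    have hKex : ∃ x ∈ K, x ∉ e ⁻¹' J := by
      by_contra hc
      push_neg at hc
      exact hne (Set.Subset.antisymm hc hsub)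
    obtain ⟨x, hxK, hxJ⟩ := hKex
    obtain ⟨j, hj, n, hle⟩ := N.exists_one_le_of_maximal hJ hxJ
    -- u := 1 ⊖ n•x  maps into J
    set u := M.sub M.one (M.nfold n x) with hu
    have heu : e u ∈ J := by
      have : e u = N.sub N.one (N.nfold n (e x)) := by
        rw [hu, he.sub, he.one, he.nfold]
      rw [this]
      have hres : N.le (N.sub N.one (N.nfold n (e x))) j := by
        apply N.residuation
        exact hle
      exact N.mem_of_le_of_mem hJ.1 hres hj
    have huK : u ∈ K := hsub heu
    have hnf : M.nfold n x ∈ K := M.nfold_mem hK hxK n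
    have hone : M.one ∈ K := by
      have h1 : M.le M.one (M.oplus u (M.nfold n x)) := M.le_join_left M.one (M.nfold n x)
      exact M.mem_of_le_of_mem hK h1 (hK.2.1 _ huK _ hnf)
    exact hKp (M.ideal_univ_of_one_mem hK hone)

end MVAlg
section TermAlg

/-- Terms of the fMV-language over `A`. -/
inductive Tm (A : Type u) : Type u
  | var : A → Tm A
  | zero : Tm A
  | oplus : Tm A → Tm A → Tm A
  | star : Tm A → Tm A
  | mul : Tm A → Tm A → Tm A
  | smul : ℝ → Tm A → Tm A

/-- Clamp a real number into `[0,1]`. -/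
noncomputable def clampI (α : ℝ) : ℝ := max 0 (min 1 α)

lemma clampI_mem (α : ℝ) : clampI α ∈ Set.Icc (0:ℝ) 1 :=
  ⟨le_max_left _ _, max_le (by norm_num) (min_le_left _ _)⟩

lemma clampI_of_mem {α : ℝ} (h : α ∈ Set.Icc (0:ℝ) 1) : clampI α = α := by
  unfold clampI
  rw [min_eq_right h.2, max_eq_right h.1]

lemma clampI_idem (α : ℝ) : clampI (clampI α) = clampI α :=
  clampI_of_mem (clampI_mem α)

variable {A : Type u}

/-- Evaluation of terms in an fMV-algebra (scalars are clamped into `[0,1]`). -/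
noncomputable def evalT {C : Type w} (E : FMVAlg C) (h : A → C) : Tm A → C
  | .var a => h a
  | .zero => E.zero
  | .oplus t s => E.oplus (evalT E h t) (evalT E h s)
  | .star t => E.star (evalT E h t)
  | .mul t s => E.mul (evalT E h t) (evalT E h s)
  | .smul α t => E.smul (clampI α) (evalT E h t)

/-- Two terms are tensor-equivalent if they agree modulo every maximal ideal of every
fMV-algebra under every MV-homomorphic valuation of the variables. -/
def TRel (M : MVAlg A) (t s : Tm A) : Prop :=
  ∀ (C : Type u) (E : FMVAlg C) (h : A → C), MVHom M E.toMVAlg h →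
    ∀ J : Set C, E.toMVAlg.IsMaximalIdeal J →
      E.toMVAlg.Rel J (evalT E h t) (evalT E h s)

variable (M : MVAlg A)

lemma TRel.refl (t : Tm A) : TRel M t t :=
  fun _ E _ _ _ hJ => E.toMVAlg.rel_refl hJ.1 _

lemma TRel.symm {t s : Tm A} (h : TRel M t s) : TRel M s t :=
  fun C E hh hhh J hJ => E.toMVAlg.rel_symm (h C E hh hhh J hJ)

lemma TRel.trans {t s r : Tm A} (h1 : TRel M t s) (h2 : TRel M s r) : TRel M t r :=
  fun C E hh hhh J hJ =>
    E.toMVAlg.rel_trans hJ.1 (h1 C E hh hhh J hJ) (h2 C E hh hhh J hJ)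

/-- The setoid of tensor equivalence. -/
def tenSetoid : Setoid (Tm A) :=
  ⟨TRel M, fun t => TRel.refl M t, fun h => TRel.symm M h, fun h1 h2 => TRel.trans M h1 h2⟩

/-- The carrier of the semisimple tensor fMV-algebra. -/
def Ten : Type u := Quotient (tenSetoid M)

/-- Class of a term. -/
def tmk (t : Tm A) : Ten M := Quotient.mk (tenSetoid M) t

lemma tmk_exact {t s : Tm A} (h : tmk M t = tmk M s) : TRel M t s :=
  Quotient.exact h

lemma tmk_sound {t s : Tm A} (h : TRel M t s) : tmk M t = tmk M s :=
  Quotient.sound h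

lemma tmk_surjective : Function.Surjective (tmk M) := by
  intro x
  induction x using Quotient.ind with
  | _ t => exact ⟨t, rfl⟩

end TermAlg
section TenOps

variable {A : Type u} (M : MVAlg A)

/-- Lift a unary term operation to the tensor algebra. -/
def tmap (f : Tm A → Tm A) (hf : ∀ t t', TRel M t t' → TRel M (f t) (f t')) :
    Ten M → Ten M :=
  Quot.map f hf

/-- Lift a binary term operation to the tensor algebra. -/
def tmap₂ (f : Tm A → Tm A → Tm A)
    (hf : ∀ t t' s s', TRel M t t' → TRel M s s' → TRel M (f t s) (f t' s')) :
    Ten M → Ten M → Ten M := by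
  refine Quot.lift
    (fun t => Quot.lift (fun s => tmk M (f t s))
      (fun s s' hs => tmk_sound M (hf t t s s' (TRel.refl M t) hs))) ?_
  intro t t' ht
  funext y
  induction y using Quot.ind with
  | _ s => exact tmk_sound M (hf t t' s s ht (TRel.refl M s))

lemma tmap_mk (f hf) (t : Tm A) : tmap M f hf (tmk M t) = tmk M (f t) := rfl

lemma tmap₂_mk (f hf) (t s : Tm A) :
    tmap₂ M f hf (tmk M t) (tmk M s) = tmk M (f t s) := rfl

lemma trel_oplus {t t' s s' : Tm A} (ht : TRel M t t') (hs : TRel M s s') :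
    TRel M (Tm.oplus t s) (Tm.oplus t' s') := by
  intro C E h hh J hJ
  exact E.toMVAlg.rel_oplus hJ.1 (ht C E h hh J hJ) (hs C E h hh J hJ)

lemma trel_star {t t' : Tm A} (ht : TRel M t t') :
    TRel M (Tm.star t) (Tm.star t') := by
  intro C E h hh J hJ
  exact E.toMVAlg.rel_star (ht C E h hh J hJ)

lemma trel_mul {t t' s s' : Tm A} (ht : TRel M t t') (hs : TRel M s s') :
    TRel M (Tm.mul t s) (Tm.mul t' s') := by
  intro C E h hh J hJ
  exact E.toPMVAlg.rel_mul hJ.1 (ht C E h hh J hJ) (hs C E h hh J hJ)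

lemma trel_smul (α : ℝ) {t t' : Tm A} (ht : TRel M t t') :
    TRel M (Tm.smul α t) (Tm.smul α t') := by
  intro C E h hh J hJ
  exact E.toRieszMVAlg.rel_smul hJ.1 (clampI_mem α) (ht C E h hh J hJ)

end TenOps
section TenAlg

variable {A : Type u} (M : MVAlg A)

lemma ten_ax {t s : Tm A}
    (h : ∀ (C : Type u) (E : FMVAlg C) (hv : A → C), MVHom M E.toMVAlg hv →
      evalT E hv t = evalT E hv s) :
    tmk M t = tmk M s :=
  tmk_sound M (fun C E hv hh J hJ => E.toMVAlg.rel_of_eq hJ.1 (h C E hv hh))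

/-- The tensor fMV-algebra structure. -/
noncomputable def tenF : FMVAlg (Ten M) where
  oplus := tmap₂ M Tm.oplus (fun _ _ _ _ ht hs => trel_oplus M ht hs)
  star := tmap M Tm.star (fun _ _ ht => trel_star M ht)
  zero := tmk M Tm.zero
  mul := tmap₂ M Tm.mul (fun _ _ _ _ ht hs => trel_mul M ht hs)
  smul := fun α => tmap M (Tm.smul α) (fun _ _ ht => trel_smul M α ht)
  oplus_comm := by
    intro x y
    induction x using Quot.ind with | _ t => ?_
    induction y using Quot.ind with | _ s => ?_
    apply ten_ax M
    intro C E hv hh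
    exact E.oplus_comm _ _
  oplus_assoc := by
    intro x y z
    induction x using Quot.ind with | _ t => ?_
    induction y using Quot.ind with | _ s => ?_
    induction z using Quot.ind with | _ r => ?_
    apply ten_ax M
    intro C E hv hh
    exact E.oplus_assoc _ _ _
  oplus_zero := by
    intro x
    induction x using Quot.ind with | _ t => ?_
    apply ten_ax M
    intro C E hv hh
    exact E.oplus_zero _
  star_star := by
    intro x
    induction x using Quot.ind with | _ t => ?_
    apply ten_ax M
    intro C E hv hh
    exact E.star_star _
  oplus_one := by
    intro x
    induction x using Quot.ind with | _ t => ?_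
    apply ten_ax M
    intro C E hv hh
    exact E.oplus_one _
  luk := by
    intro x y
    induction x using Quot.ind with | _ t => ?_
    induction y using Quot.ind with | _ s => ?_
    apply ten_ax M
    intro C E hv hh
    exact E.luk _ _
  mul_assoc := by
    intro x y z
    induction x using Quot.ind with | _ t => ?_
    induction y using Quot.ind with | _ s => ?_
    induction z using Quot.ind with | _ r => ?_
    apply ten_ax M
    intro C E hv hh
    exact E.mul_assoc _ _ _
  mul_comm := by
    intro x y
    induction x using Quot.ind with | _ t => ?_
    induction y using Quot.ind with | _ s => ?_
    apply ten_ax M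
    intro C E hv hh
    exact E.mul_comm _ _
  mul_one := by
    intro x
    induction x using Quot.ind with | _ t => ?_
    apply ten_ax M
    intro C E hv hh
    exact E.mul_one _
  mul_linear_right := by
    intro x y z hle
    induction x using Quot.ind with | _ t => ?_
    induction y using Quot.ind with | _ s => ?_
    induction z using Quot.ind with | _ r => ?_
    have hrel : TRel M (Tm.oplus (Tm.star s) (Tm.star r)) (Tm.star Tm.zero) :=
      tmk_exact M hle
    apply tmk_sound M
    intro C E hv hh J hJ
    set Mn := E.toMVAlg with hMn
    set a := evalT E hv t
    set b := evalT E hv s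
    set c := evalT E hv r
    have hx := hrel C E hv hh J hJ
    have hsubJ : Mn.sub b (Mn.star c) ∈ J := (Mn.rel_one_iff hJ.1).1 hx
    have hbb' : Mn.Rel J b (Mn.meet b (Mn.star c)) := Mn.rel_meet hJ.1 hsubJ
    have heq := E.mul_linear_right a (Mn.meet b (Mn.star c)) c
      (Mn.meet_le_right b (Mn.star c))
    show Mn.Rel J (E.mul a (Mn.oplus b c)) (Mn.oplus (E.mul a b) (E.mul a c))
    refine Mn.rel_trans hJ.1 (E.toPMVAlg.rel_mul hJ.1 (Mn.rel_refl hJ.1 a)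
      (Mn.rel_oplus hJ.1 hbb' (Mn.rel_refl hJ.1 c))) ?_
    refine Mn.rel_trans hJ.1 (Mn.rel_of_eq hJ.1 heq) ?_
    exact Mn.rel_oplus hJ.1
      (E.toPMVAlg.rel_mul hJ.1 (Mn.rel_refl hJ.1 a) (Mn.rel_symm hbb'))
      (Mn.rel_refl hJ.1 _)
  mul_linear_left := by
    intro x y z hle
    induction x using Quot.ind with | _ t => ?_
    induction y using Quot.ind with | _ s => ?_
    induction z using Quot.ind with | _ r => ?_
    have hrel : TRel M (Tm.oplus (Tm.star t) (Tm.star s)) (Tm.star Tm.zero) :=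
      tmk_exact M hle
    apply tmk_sound M
    intro C E hv hh J hJ
    set Mn := E.toMVAlg with hMn
    set a := evalT E hv t
    set b := evalT E hv s
    set c := evalT E hv r
    have hx := hrel C E hv hh J hJ
    have hsubJ : Mn.sub a (Mn.star b) ∈ J := (Mn.rel_one_iff hJ.1).1 hx
    have haa' : Mn.Rel J a (Mn.meet a (Mn.star b)) := Mn.rel_meet hJ.1 hsubJ
    have heq := E.mul_linear_left (Mn.meet a (Mn.star b)) b c
      (Mn.meet_le_right a (Mn.star b))
    show Mn.Rel J (E.mul (Mn.oplus a b) c) (Mn.oplus (E.mul a c) (E.mul b c))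
    refine Mn.rel_trans hJ.1 (E.toPMVAlg.rel_mul hJ.1
      (Mn.rel_oplus hJ.1 haa' (Mn.rel_refl hJ.1 b)) (Mn.rel_refl hJ.1 c)) ?_
    refine Mn.rel_trans hJ.1 (Mn.rel_of_eq hJ.1 heq) ?_
    exact Mn.rel_oplus hJ.1
      (E.toPMVAlg.rel_mul hJ.1 (Mn.rel_symm haa') (Mn.rel_refl hJ.1 c))
      (Mn.rel_refl hJ.1 _)
  smul_oplus := by
    intro α hα x y hle
    induction x using Quot.ind with | _ s => ?_
    induction y using Quot.ind with | _ r => ?_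
    have hrel : TRel M (Tm.oplus (Tm.star s) (Tm.star r)) (Tm.star Tm.zero) :=
      tmk_exact M hle
    apply tmk_sound M
    intro C E hv hh J hJ
    set Mn := E.toMVAlg with hMn
    set b := evalT E hv s
    set c := evalT E hv r
    have hx := hrel C E hv hh J hJ
    have hsubJ : Mn.sub b (Mn.star c) ∈ J := (Mn.rel_one_iff hJ.1).1 hx
    have hbb' : Mn.Rel J b (Mn.meet b (Mn.star c)) := Mn.rel_meet hJ.1 hsubJ
    have heq := E.smul_oplus α hα (Mn.meet b (Mn.star c)) c
      (Mn.meet_le_right b (Mn.star c))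
    show Mn.Rel J (E.smul (clampI α) (Mn.oplus b c))
      (Mn.oplus (E.smul (clampI α) b) (E.smul (clampI α) c))
    rw [clampI_of_mem hα]
    refine Mn.rel_trans hJ.1 (E.toRieszMVAlg.rel_smul hJ.1 hα
      (Mn.rel_oplus hJ.1 hbb' (Mn.rel_refl hJ.1 c))) ?_
    refine Mn.rel_trans hJ.1 (Mn.rel_of_eq hJ.1 heq) ?_
    exact Mn.rel_oplus hJ.1 (E.toRieszMVAlg.rel_smul hJ.1 hα (Mn.rel_symm hbb'))
      (Mn.rel_refl hJ.1 _)
  add_smul := by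
    intro α β hα hβ hab x
    induction x using Quot.ind with | _ t => ?_
    constructor
    · apply ten_ax M
      intro C E hv hh
      show E.smul (clampI (α + β)) (evalT E hv t) =
        E.oplus (E.smul (clampI α) (evalT E hv t)) (E.smul (clampI β) (evalT E hv t))
      rw [clampI_of_mem hα, clampI_of_mem hβ,
        clampI_of_mem ⟨add_nonneg hα.1 hβ.1, hab⟩]
      exact (E.add_smul α β hα hβ hab _).1
    · apply ten_ax M
      intro C E hv hh
      show E.oplus (E.star (E.smul (clampI α) (evalT E hv t)))
          (E.star (E.smul (clampI β) (evalT E hv t))) = E.star E.zero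
      rw [clampI_of_mem hα, clampI_of_mem hβ]
      exact (E.add_smul α β hα hβ hab _).2
  mul_smul := by
    intro α β hα hβ x
    induction x using Quot.ind with | _ t => ?_
    apply ten_ax M
    intro C E hv hh
    show E.smul (clampI (α * β)) (evalT E hv t) =
      E.smul (clampI α) (E.smul (clampI β) (evalT E hv t))
    rw [clampI_of_mem hα, clampI_of_mem hβ,
      clampI_of_mem ⟨mul_nonneg hα.1 hβ.1, mul_le_one₀ hα.2 hβ.1 hβ.2⟩]
    exact E.mul_smul α β hα hβ _
  one_smul := by
    intro x
    induction x using Quot.ind with | _ t => ?_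
    apply ten_ax M
    intro C E hv hh
    show E.smul (clampI 1) (evalT E hv t) = evalT E hv t
    rw [clampI_of_mem ⟨zero_le_one, le_refl 1⟩]
    exact E.one_smul _
  smul_mul_left := by
    intro α hα x y
    induction x using Quot.ind with | _ t => ?_
    induction y using Quot.ind with | _ s => ?_
    apply ten_ax M
    intro C E hv hh
    show E.smul (clampI α) (E.mul (evalT E hv t) (evalT E hv s)) =
      E.mul (E.smul (clampI α) (evalT E hv t)) (evalT E hv s)
    rw [clampI_of_mem hα]
    exact E.smul_mul_left α hα _ _
  smul_mul_right := by
    intro α hα x y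
    induction x using Quot.ind with | _ t => ?_
    induction y using Quot.ind with | _ s => ?_
    apply ten_ax M
    intro C E hv hh
    show E.smul (clampI α) (E.mul (evalT E hv t) (evalT E hv s)) =
      E.mul (evalT E hv t) (E.smul (clampI α) (evalT E hv s))
    rw [clampI_of_mem hα]
    exact E.smul_mul_right α hα _ _

end TenAlg
section TenSS

variable {A : Type u} (M : MVAlg A)

/-- The canonical map into the tensor algebra. -/
def tenIota : A → Ten M := fun a => tmk M (Tm.var a)

lemma tenIota_hom : MVHom M (tenF M).toMVAlg (tenIota M) := by
  refine ⟨?_, ?_, ?_⟩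
  · intro a b
    apply ten_ax M
    intro C E hv hh
    exact hh.1 a b
  · intro a
    apply ten_ax M
    intro C E hv hh
    exact hh.2.1 a
  · apply ten_ax M
    intro C E hv hh
    exact hh.2.2

/-- n-fold sums in the tensor algebra are classes of term n-fold sums. -/
def tmNfold : ℕ → Tm A → Tm A
  | 0, _ => Tm.zero
  | n+1, t => Tm.oplus t (tmNfold n t)

lemma tenF_nfold (n : ℕ) (t : Tm A) :
    (tenF M).toMVAlg.nfold n (tmk M t) = tmk M (tmNfold n t) := by
  induction n with
  | zero => rfl
  | succ k ih =>
      show (tenF M).toMVAlg.oplus (tmk M t) ((tenF M).toMVAlg.nfold k (tmk M t)) =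
        tmk M (Tm.oplus t (tmNfold k t))
      rw [ih]
      rfl

lemma evalT_tmNfold {C : Type w} (E : FMVAlg C) (hv : A → C) (n : ℕ) (t : Tm A) :
    evalT E hv (tmNfold n t) = E.toMVAlg.nfold n (evalT E hv t) := by
  induction n with
  | zero => rfl
  | succ k ih =>
      show E.oplus (evalT E hv t) (evalT E hv (tmNfold k t)) =
        E.toMVAlg.oplus (evalT E hv t) (E.toMVAlg.nfold k (evalT E hv t))
      rw [ih]

/-- The ideal of the tensor algebra attached to a test. -/
def tenK {C : Type u} (E : FMVAlg C) (hv : A → C) (J : Set C) : Set (Ten M) :=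
  {x | ∃ t : Tm A, x = tmk M t ∧ evalT E hv t ∈ J}

variable {C : Type u} (E : FMVAlg C) (hv : A → C) {J : Set C}

lemma tenK_mem_iff (hh : MVHom M E.toMVAlg hv) (hJ : E.toMVAlg.IsMaximalIdeal J) {t : Tm A} :
    tmk M t ∈ tenK M E hv J ↔ evalT E hv t ∈ J := by
  constructor
  · rintro ⟨t', ht', hmem⟩
    have hrel := (tmk_exact M ht') C E hv hh J hJ
    exact E.toMVAlg.mem_of_rel_of_mem hJ.1 (E.toMVAlg.rel_symm hrel) hmem
  · intro h
    exact ⟨t, rfl, h⟩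

lemma tenK_maximal (hh : MVHom M E.toMVAlg hv) (hJ : E.toMVAlg.IsMaximalIdeal J) : (tenF M).toMVAlg.IsMaximalIdeal (tenK M E hv J) := by
  set Mn := E.toMVAlg
  set Fm := (tenF M).toMVAlg with hFm
  have hKideal : Fm.IsIdeal (tenK M E hv J) := by
    refine ⟨⟨Tm.zero, rfl, hJ.1.1⟩, ?_, ?_⟩
    · rintro x ⟨t, rfl, ht⟩ y ⟨s, rfl, hs⟩
      exact ⟨Tm.oplus t s, rfl, hJ.1.2.1 _ ht _ hs⟩
    · intro x y hxy hy
      induction x using Quot.ind with | _ t => ?_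
      obtain ⟨s, hys, hs⟩ := hy
      rw [hys] at hxy
      have hrel : TRel M (Tm.oplus (Tm.star t) s) (Tm.star Tm.zero) := tmk_exact M hxy
      have hx := hrel C E hv hh J hJ
      have hsubJ : Mn.sub (evalT E hv t) (evalT E hv s) ∈ J :=
        (Mn.rel_one_iff hJ.1).1 hx
      refine ⟨t, rfl, ?_⟩
      have hle : Mn.le (evalT E hv t)
          (Mn.oplus (Mn.sub (evalT E hv t) (evalT E hv s)) (evalT E hv s)) :=
        Mn.le_sub_oplus _ _
      exact Mn.mem_of_le_of_mem hJ.1 hle (hJ.1.2.1 _ hsubJ _ hs)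
  refine ⟨hKideal, ?_, ?_⟩
  · intro huniv
    have h1 : Fm.one ∈ tenK M E hv J := huniv ▸ Set.mem_univ _
    have h1' : tmk M (Tm.star Tm.zero) ∈ tenK M E hv J := h1
    have : evalT E hv (Tm.star Tm.zero) ∈ J := (tenK_mem_iff M E hv hh hJ).1 h1'
    exact Mn.one_not_mem hJ.1 hJ.2.1 this
  · intro K hK hKp hsub
    by_contra hne
    have hKex : ∃ x ∈ K, x ∉ tenK M E hv J := by
      by_contra hc
      push_neg at hc
      exact hne (Set.Subset.antisymm hc hsub)
    obtain ⟨x, hxK, hxJ⟩ := hKex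
    induction x using Quot.ind with | _ t => ?_
    have hdJ : evalT E hv t ∉ J := fun h => hxJ ⟨t, rfl, h⟩
    obtain ⟨j, hj, n, hle⟩ := Mn.exists_one_le_of_maximal hJ hdJ
    -- the element 1 ⊖ n•x lies in tenK
    set uT : Tm A := Tm.star (Tm.oplus (Tm.star (Tm.star Tm.zero)) (tmNfold n t)) with huT
    have huK : tmk M uT ∈ tenK M E hv J := by
      refine ⟨uT, rfl, ?_⟩
      have : evalT E hv uT = Mn.sub Mn.one (Mn.nfold n (evalT E hv t)) := by
        show E.star (E.oplus (E.star (E.star E.zero)) (evalT E hv (tmNfold n t))) = _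
        rw [evalT_tmNfold]
        rfl
      rw [this]
      have hres : Mn.le (Mn.sub Mn.one (Mn.nfold n (evalT E hv t))) j :=
        Mn.residuation hle
      exact Mn.mem_of_le_of_mem hJ.1 hres hj
    have hnfK : Fm.nfold n (tmk M t) ∈ K := Fm.nfold_mem hK hxK n
    have honeK : Fm.one ∈ K := by
      have hjoin : Fm.le Fm.one (Fm.oplus (Fm.sub Fm.one (Fm.nfold n (tmk M t)))
          (Fm.nfold n (tmk M t))) := Fm.le_sub_oplus _ _
      have hsubK : Fm.sub Fm.one (Fm.nfold n (tmk M t)) ∈ K := by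
        have : Fm.sub Fm.one (Fm.nfold n (tmk M t)) = tmk M uT := by
          rw [tenF_nfold]
          rfl
        rw [this]
        exact hsub huK
      exact Fm.mem_of_le_of_mem hK hjoin (hK.2.1 _ hsubK _ hnfK)
    exact hKp (Fm.ideal_univ_of_one_mem hK honeK)

/-- The tensor algebra is semisimple. -/
lemma tenF_semisimple : (tenF M).Semisimple := by
  apply Set.ext
  intro x
  simp only [Set.mem_setOf_eq, Set.mem_singleton_iff]
  constructor
  · intro hx
    induction x using Quot.ind with | _ t => ?_
    show tmk M t = tmk M Tm.zero
    apply tmk_sound M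
    intro C E hv hh J hJ
    have hmem : tmk M t ∈ tenK M E hv J := hx _ (tenK_maximal M E hv hh hJ)
    have := (tenK_mem_iff M E hv hh hJ).1 hmem
    exact (E.toMVAlg.rel_zero_iff hJ.1).2 this
  · intro hx I hI
    rw [hx]
    exact hI.1.1

end TenSS
section UP

variable {A : Type u} {B : Type v} (M : MVAlg A) (D : FMVAlg B) (f : A → B)

/-- Relation: equal evaluation in `D`. -/
def dRel (t s : Tm A) : Prop := evalT D f t = evalT D f s

/-- The image of term evaluation in `D`, as a `Type u` quotient of terms. -/
def DC : Type u := Quot (dRel D f)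

def dmk : Tm A → DC D f := Quot.mk (dRel D f)

/-- The embedding of the image quotient into `B`. -/
noncomputable def eC : DC D f → B := Quot.lift (evalT D f) (fun _ _ h => h)

lemma eC_dmk (t : Tm A) : eC D f (dmk D f t) = evalT D f t := rfl

lemma dmk_eq_of {t s : Tm A} (h : evalT D f t = evalT D f s) : dmk D f t = dmk D f s :=
  Quot.sound h

lemma eC_inj {x y : DC D f} (h : eC D f x = eC D f y) : x = y := by
  induction x using Quot.ind with | _ t => ?_
  induction y using Quot.ind with | _ s => ?_
  exact dmk_eq_of D f h

/-- operations on the image quotient -/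
noncomputable def dOplus : DC D f → DC D f → DC D f := by
  refine Quot.lift (fun t => Quot.lift (fun s => dmk D f (Tm.oplus t s)) ?_) ?_
  · intro s s' hs
    apply dmk_eq_of
    show D.oplus (evalT D f t) (evalT D f s) = D.oplus (evalT D f t) (evalT D f s')
    rw [hs]
  · intro t t' ht
    funext y
    induction y using Quot.ind with | _ s => ?_
    apply dmk_eq_of
    show D.oplus (evalT D f t) (evalT D f s) = D.oplus (evalT D f t') (evalT D f s)
    rw [ht]

noncomputable def dStar : DC D f → DC D f :=
  Quot.map Tm.star (by
    intro t t' ht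
    show D.star (evalT D f t) = D.star (evalT D f t')
    rw [ht])

noncomputable def dMul : DC D f → DC D f → DC D f := by
  refine Quot.lift (fun t => Quot.lift (fun s => dmk D f (Tm.mul t s)) ?_) ?_
  · intro s s' hs
    apply dmk_eq_of
    show D.mul (evalT D f t) (evalT D f s) = D.mul (evalT D f t) (evalT D f s')
    rw [hs]
  · intro t t' ht
    funext y
    induction y using Quot.ind with | _ s => ?_
    apply dmk_eq_of
    show D.mul (evalT D f t) (evalT D f s) = D.mul (evalT D f t') (evalT D f s)
    rw [ht]

noncomputable def dSmul (α : ℝ) : DC D f → DC D f :=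
  Quot.map (Tm.smul α) (by
    intro t t' ht
    show D.smul (clampI α) (evalT D f t) = D.smul (clampI α) (evalT D f t')
    rw [ht])

lemma eC_oplus (x y : DC D f) :
    eC D f (dOplus D f x y) = D.oplus (eC D f x) (eC D f y) := by
  induction x using Quot.ind with | _ t => ?_
  induction y using Quot.ind with | _ s => ?_
  rfl

lemma eC_star (x : DC D f) : eC D f (dStar D f x) = D.star (eC D f x) := by
  induction x using Quot.ind with | _ t => ?_
  rfl

lemma eC_mul (x y : DC D f) :
    eC D f (dMul D f x y) = D.mul (eC D f x) (eC D f y) := by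
  induction x using Quot.ind with | _ t => ?_
  induction y using Quot.ind with | _ s => ?_
  rfl

lemma eC_smul (α : ℝ) (x : DC D f) :
    eC D f (dSmul D f α x) = D.smul (clampI α) (eC D f x) := by
  induction x using Quot.ind with | _ t => ?_
  rfl

lemma eC_smul' {α : ℝ} (hα : α ∈ Set.Icc (0:ℝ) 1) (x : DC D f) :
    eC D f (dSmul D f α x) = D.smul α (eC D f x) := by
  rw [eC_smul, clampI_of_mem hα]

lemma eC_zero : eC D f (dmk D f Tm.zero) = D.zero := rfl

/-- The fMV structure on the image quotient. -/
noncomputable def dF : FMVAlg (DC D f) where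
  oplus := dOplus D f
  star := dStar D f
  zero := dmk D f Tm.zero
  mul := dMul D f
  smul := dSmul D f
  oplus_comm := by
    intro x y; apply eC_inj D f
    rw [eC_oplus, eC_oplus, D.oplus_comm]
  oplus_assoc := by
    intro x y z; apply eC_inj D f
    rw [eC_oplus, eC_oplus, eC_oplus, eC_oplus, D.oplus_assoc]
  oplus_zero := by
    intro x; apply eC_inj D f
    rw [eC_oplus, eC_zero, D.oplus_zero]
  star_star := by
    intro x; apply eC_inj D f
    rw [eC_star, eC_star, D.star_star]
  oplus_one := by
    intro x; apply eC_inj D f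
    rw [eC_oplus, eC_star, eC_zero, D.oplus_one]
  luk := by
    intro x y; apply eC_inj D f
    rw [eC_oplus, eC_star, eC_oplus, eC_star, eC_oplus, eC_star, eC_oplus, eC_star]
    exact D.luk _ _
  mul_assoc := by
    intro x y z; apply eC_inj D f
    rw [eC_mul, eC_mul, eC_mul, eC_mul, D.mul_assoc]
  mul_comm := by
    intro x y; apply eC_inj D f
    rw [eC_mul, eC_mul, D.mul_comm]
  mul_one := by
    intro x; apply eC_inj D f
    rw [eC_mul]
    show D.mul (eC D f x) (eC D f (dStar D f (dmk D f Tm.zero))) = eC D f x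
    rw [eC_star, eC_zero]
    exact D.mul_one _
  mul_linear_right := by
    intro x y z hle
    have hle' : D.toMVAlg.le (eC D f y) (D.star (eC D f z)) := by
      have := congrArg (eC D f) hle
      rw [eC_oplus, eC_star, eC_star] at this
      show D.oplus (D.star (eC D f y)) (D.star (eC D f z)) = D.toMVAlg.one
      rw [this]
      show eC D f (dStar D f (dmk D f Tm.zero)) = _
      rw [eC_star, eC_zero]
      rfl
    apply eC_inj D f
    rw [eC_mul, eC_oplus, eC_oplus, eC_mul, eC_mul]
    exact D.mul_linear_right _ _ _ hle'
  mul_linear_left := by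
    intro x y z hle
    have hle' : D.toMVAlg.le (eC D f x) (D.star (eC D f y)) := by
      have := congrArg (eC D f) hle
      rw [eC_oplus, eC_star, eC_star] at this
      show D.oplus (D.star (eC D f x)) (D.star (eC D f y)) = D.toMVAlg.one
      rw [this]
      show eC D f (dStar D f (dmk D f Tm.zero)) = _
      rw [eC_star, eC_zero]
      rfl
    apply eC_inj D f
    rw [eC_mul, eC_oplus, eC_oplus, eC_mul, eC_mul]
    exact D.mul_linear_left _ _ _ hle'
  smul_oplus := by
    intro α hα x y hle
    have hle' : D.toMVAlg.le (eC D f x) (D.star (eC D f y)) := by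
      have := congrArg (eC D f) hle
      rw [eC_oplus, eC_star, eC_star] at this
      show D.oplus (D.star (eC D f x)) (D.star (eC D f y)) = D.toMVAlg.one
      rw [this]
      show eC D f (dStar D f (dmk D f Tm.zero)) = _
      rw [eC_star, eC_zero]
      rfl
    apply eC_inj D f
    rw [eC_smul' D f hα, eC_oplus, eC_oplus, eC_smul' D f hα, eC_smul' D f hα]
    exact D.smul_oplus α hα _ _ hle'
  add_smul := by
    intro α β hα hβ hab x
    have habI : α + β ∈ Set.Icc (0:ℝ) 1 := ⟨add_nonneg hα.1 hβ.1, hab⟩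
    constructor
    · apply eC_inj D f
      rw [eC_smul' D f habI, eC_oplus, eC_smul' D f hα, eC_smul' D f hβ]
      exact (D.add_smul α β hα hβ hab _).1
    · show dOplus D f (dStar D f (dSmul D f α x)) (dStar D f (dSmul D f β x)) =
        dStar D f (dmk D f Tm.zero)
      apply eC_inj D f
      rw [eC_oplus, eC_star, eC_star, eC_smul' D f hα, eC_smul' D f hβ, eC_star, eC_zero]
      exact (D.add_smul α β hα hβ hab _).2
  mul_smul := by
    intro α β hα hβ x
    have habI : α * β ∈ Set.Icc (0:ℝ) 1 :=
      ⟨mul_nonneg hα.1 hβ.1, mul_le_one₀ hα.2 hβ.1 hβ.2⟩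
    apply eC_inj D f
    rw [eC_smul' D f habI, eC_smul' D f hα, eC_smul' D f hβ]
    exact D.mul_smul α β hα hβ _
  one_smul := by
    intro x
    apply eC_inj D f
    rw [eC_smul' D f ⟨zero_le_one, le_refl (1:ℝ)⟩]
    exact D.one_smul _
  smul_mul_left := by
    intro α hα x y
    apply eC_inj D f
    rw [eC_smul' D f hα, eC_mul, eC_mul, eC_smul' D f hα]
    exact D.smul_mul_left α hα _ _
  smul_mul_right := by
    intro α hα x y
    apply eC_inj D f
    rw [eC_smul' D f hα, eC_mul, eC_mul, eC_smul' D f hα]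
    exact D.smul_mul_right α hα _ _

lemma eC_hom : MVHom (dF D f).toMVAlg D.toMVAlg (eC D f) :=
  ⟨eC_oplus D f, eC_star D f, eC_zero D f⟩

/-- The valuation into the image quotient. -/
def dHc : A → DC D f := fun a => dmk D f (Tm.var a)

lemma dHc_hom (hf : MVHom M D.toMVAlg f) : MVHom M (dF D f).toMVAlg (dHc D f) := by
  refine ⟨?_, ?_, ?_⟩
  · intro a b
    apply eC_inj D f
    show eC D f (dHc D f (M.oplus a b)) = eC D f (dOplus D f (dHc D f a) (dHc D f b))
    rw [eC_oplus]
    exact hf.1 a b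
  · intro a
    apply eC_inj D f
    show eC D f (dHc D f (M.star a)) = eC D f (dStar D f (dHc D f a))
    rw [eC_star]
    exact hf.2.1 a
  · apply eC_inj D f
    show eC D f (dHc D f M.zero) = eC D f (dmk D f Tm.zero)
    exact hf.2.2

lemma evalT_dF (t : Tm A) : evalT (dF D f) (dHc D f) t = dmk D f t := by
  induction t with
  | var a => rfl
  | zero => rfl
  | oplus t s iht ihs =>
      show dOplus D f (evalT (dF D f) (dHc D f) t) (evalT (dF D f) (dHc D f) s) = _
      rw [iht, ihs]; rfl
  | star t iht =>
      show dStar D f (evalT (dF D f) (dHc D f) t) = _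
      rw [iht]; rfl
  | mul t s iht ihs =>
      show dMul D f (evalT (dF D f) (dHc D f) t) (evalT (dF D f) (dHc D f) s) = _
      rw [iht, ihs]; rfl
  | smul α t iht =>
      show dSmul D f (clampI α) (evalT (dF D f) (dHc D f) t) = dmk D f (Tm.smul α t)
      rw [iht]
      apply dmk_eq_of
      show D.smul (clampI (clampI α)) (evalT D f t) = D.smul (clampI α) (evalT D f t)
      rw [clampI_idem]

/-- Separation: tensor-equivalent terms evaluate equally in any semisimple fMV-algebra. -/
lemma separation (hD : D.Semisimple) (hf : MVHom M D.toMVAlg f) {t s : Tm A}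
    (h : TRel M t s) : evalT D f t = evalT D f s := by
  have key : ∀ u1 u2 : Tm A, TRel M u1 u2 →
      D.toMVAlg.le (evalT D f u1) (evalT D f u2) := by
    intro u1 u2 hu
    have hmem : D.toMVAlg.sub (evalT D f u1) (evalT D f u2) ∈
        {x | ∀ I, D.toMVAlg.IsMaximalIdeal I → x ∈ I} := by
      intro J hJ
      have hJC := (dF D f).toMVAlg.maximal_preimage (eC_hom D f) hJ
      have hrel := hu (DC D f) (dF D f) (dHc D f) (dHc_hom M D f hf) _ hJC
      rw [evalT_dF, evalT_dF] at hrel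
      have h1 : (dF D f).toMVAlg.sub (dmk D f u1) (dmk D f u2) ∈ eC D f ⁻¹' J := hrel.1
      have h2 : eC D f ((dF D f).toMVAlg.sub (dmk D f u1) (dmk D f u2)) =
          D.toMVAlg.sub (evalT D f u1) (evalT D f u2) := (eC_hom D f).sub _ _
      have h1' : eC D f ((dF D f).toMVAlg.sub (dmk D f u1) (dmk D f u2)) ∈ J := h1
      rwa [h2] at h1'
    rw [hD] at hmem
    exact D.toMVAlg.le_of_sub_eq_zero hmem
  exact D.toMVAlg.le_antisymm (key t s h) (key s t (TRel.symm M h))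

end UP
/-- the semisimple tensor fMV-algebra of a semisimple MV-algebra. -/
theorem stmt9 {A : Type u} (M : MVAlg A) (hM : M.Semisimple) :
    ∃ (T : Type u) (F : FMVAlg T) (ι : A → T),
      F.Semisimple ∧ MVHom M F.toMVAlg ι ∧
      ∀ (B : Type v) (D : FMVAlg B), D.Semisimple →
        ∀ f : A → B, MVHom M D.toMVAlg f →
          ∃! g : T → B, FMVHom F D g ∧ g ∘ ι = f := by
  classical
  refine ⟨Ten M, tenF M, tenIota M, tenF_semisimple M, tenIota_hom M, ?_⟩
  intro B D hD f hf
  refine ⟨Quot.lift (evalT D f) (fun t s h => separation M D f hD hf h), ⟨?_, ?_⟩, ?_⟩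
  · -- the lift is an fMV-homomorphism
    refine ⟨⟨?_, ?_, ?_⟩, ?_, ?_⟩
    · intro x y
      induction x using Quot.ind with | _ t => ?_
      induction y using Quot.ind with | _ s => ?_
      rfl
    · intro x
      induction x using Quot.ind with | _ t => ?_
      rfl
    · rfl
    · intro x y
      induction x using Quot.ind with | _ t => ?_
      induction y using Quot.ind with | _ s => ?_
      rfl
    · intro α hα x
      induction x using Quot.ind with | _ t => ?_
      show D.smul (clampI α) (evalT D f t) = D.smul α (evalT D f t)
      rw [clampI_of_mem hα]
  · funext a
    rfl
  · -- uniqueness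
    intro g' ⟨hg'hom, hg'comp⟩
    set g : Ten M → B := Quot.lift (evalT D f) (fun t s h => separation M D f hD hf h) with hgdef
    show g' = g
    funext x
    induction x using Quot.ind with | _ t => ?_
    induction t with
    | var a => exact congrFun hg'comp a
    | zero => exact hg'hom.1.2.2
    | oplus t s iht ihs =>
        have iht' : g' (tmk M t) = g (tmk M t) := iht
        have ihs' : g' (tmk M s) = g (tmk M s) := ihs
        have e1 : g' ((tenF M).oplus (tmk M t) (tmk M s)) =
            D.oplus (g' (tmk M t)) (g' (tmk M s)) := hg'hom.1.1 _ _
        show g' ((tenF M).oplus (tmk M t) (tmk M s)) = g (tmk M (Tm.oplus t s))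
        rw [e1, iht', ihs']
        rfl
    | star t iht =>
        have iht' : g' (tmk M t) = g (tmk M t) := iht
        have e1 : g' ((tenF M).star (tmk M t)) = D.star (g' (tmk M t)) := hg'hom.1.2.1 _
        show g' ((tenF M).star (tmk M t)) = g (tmk M (Tm.star t))
        rw [e1, iht']
        rfl
    | mul t s iht ihs =>
        have iht' : g' (tmk M t) = g (tmk M t) := iht
        have ihs' : g' (tmk M s) = g (tmk M s) := ihs
        have e1 : g' ((tenF M).mul (tmk M t) (tmk M s)) =
            D.mul (g' (tmk M t)) (g' (tmk M s)) := hg'hom.2.1 _ _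
        show g' ((tenF M).mul (tmk M t) (tmk M s)) = g (tmk M (Tm.mul t s))
        rw [e1, iht', ihs']
        rfl
    | smul α t iht =>
        have e1 : tmk M (Tm.smul α t) = (tenF M).smul (clampI α) (tmk M t) := by
          apply tmk_sound M
          intro C E hv hh J hJ
          apply E.toMVAlg.rel_of_eq hJ.1
          show E.smul (clampI α) (evalT E hv t) = E.smul (clampI (clampI α)) (evalT E hv t)
          rw [clampI_idem]
        have iht' : g' (tmk M t) = g (tmk M t) := iht
        show g' (tmk M (Tm.smul α t)) = g (tmk M (Tm.smul α t))
        rw [e1, hg'hom.2.2 (clampI α) (clampI_mem α) (tmk M t), iht']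
        show D.smul (clampI α) (evalT D f t) = D.smul (clampI (clampI α)) (evalT D f t)
        rw [clampI_idem]
end
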